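/- Let z be a point of the upper half-plane ℍ and let φ : [0,∞) → [0,∞] be measurable. Then ∫_ℍ φ(u(z,w)) dμ(w) = 4π ∫₀^∞ φ(u) du, where both sides are extended-real-valued Lebesgue integrals. -/

import Mathlib

/-!
For `z = i` the hyperbolic circle `u(i, w) = u` is the Euclidean circle with centre `i (1 + 2u)`
and radius `Q(u) = 2 √(u² + u)`. Parametrise it by `θ ↦ (-Q(u) sin θ, 1) / D(u, θ)` with
`D = 1 + 2u - Q(u) cos θ`; this is the Cayley transform of polar coordinates in the disc. The
Jacobian of `(u, θ) ↦ w` is `2 / D² = 2 (Im w)²`, so the hyperbolic area element `dμ(w)` becomes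
`2 du dθ`. For general `z` compose with `w ↦ Re z + Im z · w`, which preserves both `u` and the
density `Jacobian · (Im w)⁻²`. The map is injective on `(0, ∞) × (-π, π)` and misses only part of
the vertical line through `z`, so integrating out `θ` gives `4π ∫ φ(u) du`.
-/

open MeasureTheory
open scoped ENNReal

/-- `u(z,w) = |z − w|² / (4 Im z Im w)`. -/
noncomputable def hypu (z w : ℂ) : ℝ :=
  ‖z - w‖ ^ 2 / (4 * z.im * w.im)

open Real Set

lemma ContinuousLinearMap.det_real_prod (L : ℝ × ℝ →L[ℝ] ℝ × ℝ) :
    L.det = (L (1, 0)).1 * (L (0, 1)).2 - (L (0, 1)).1 * (L (1, 0)).2 := by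
  rw [ContinuousLinearMap.det, ← LinearMap.det_toMatrix (Module.Basis.finTwoProd ℝ),
    Matrix.det_fin_two]
  simp [LinearMap.toMatrix_apply]

lemma hypu_I (x y : ℝ) :
    hypu Complex.I (x + y * Complex.I) = (x ^ 2 + (y - 1) ^ 2) / (4 * y) := by
  simp [hypu, Complex.sq_norm, Complex.normSq_apply]
  ring

lemma hypu_affine (a : ℝ) {c : ℝ} (hc : c ≠ 0) (ζ w : ℂ) :
    hypu (a + c * ζ) (a + c * w) = hypu ζ w := by
  rw [hypu, hypu, add_sub_add_left_eq_sub, ← mul_sub, norm_mul, Complex.norm_real,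
    Real.norm_eq_abs, mul_pow, sq_abs]
  simp only [Complex.add_im, Complex.ofReal_im, zero_add, Complex.im_ofReal_mul]
  field_simp

noncomputable def circleRadius (u : ℝ) : ℝ := 2 * √(u ^ 2 + u)

lemma circleRadius_nonneg (u : ℝ) : 0 ≤ circleRadius u := by
  unfold circleRadius; positivity

lemma circleRadius_pos {u : ℝ} (hu : 0 < u) : 0 < circleRadius u := by
  unfold circleRadius; positivity

lemma circleRadius_sq {u : ℝ} (hu : 0 ≤ u) : circleRadius u ^ 2 = 4 * (u ^ 2 + u) := by
  rw [circleRadius, mul_pow, sq_sqrt (by positivity)]; ring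

lemma circleRadius_lt {u : ℝ} (hu : 0 ≤ u) : circleRadius u < 1 + 2 * u := by
  nlinarith [circleRadius_sq hu, circleRadius_nonneg u]

lemma hasDerivAt_circleRadius {u : ℝ} (hu : 0 < u) :
    HasDerivAt circleRadius ((4 * u + 2) / circleRadius u) u := by
  have hpoly : HasDerivAt (fun t : ℝ => t ^ 2 + t) (2 * u + 1) u := by
    simpa using (hasDerivAt_pow 2 u).fun_add (hasDerivAt_id' u)
  refine ((hpoly.sqrt (by positivity)).const_mul 2).congr_deriv ?_
  rw [circleRadius]
  field_simp
  ring

noncomputable def polarDenom (p : ℝ × ℝ) : ℝ := 1 + 2 * p.1 - circleRadius p.1 * cos p.2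

lemma polarDenom_pos {p : ℝ × ℝ} (hu : 0 ≤ p.1) : 0 < polarDenom p := by
  unfold polarDenom
  nlinarith [circleRadius_lt hu, circleRadius_nonneg p.1, cos_le_one p.2]

lemma hasFDerivAt_polarDenom {p : ℝ × ℝ} (hu : 0 < p.1) :
    HasFDerivAt polarDenom ((2 - (4 * p.1 + 2) / circleRadius p.1 * cos p.2) • .fst ℝ ℝ ℝ +
      (circleRadius p.1 * sin p.2) • .snd ℝ ℝ ℝ) p := by
  have hQ : HasFDerivAt (fun q : ℝ × ℝ => circleRadius q.1)
      (((4 * p.1 + 2) / circleRadius p.1) • ContinuousLinearMap.fst ℝ ℝ ℝ) p :=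
    (hasDerivAt_circleRadius hu).comp_hasFDerivAt p hasFDerivAt_fst
  have hcos : HasFDerivAt (fun q : ℝ × ℝ => cos q.2)
      (-sin p.2 • ContinuousLinearMap.snd ℝ ℝ ℝ) p :=
    (hasDerivAt_cos p.2).comp_hasFDerivAt p hasFDerivAt_snd
  refine (((hasFDerivAt_fst.const_mul (2 : ℝ)).const_add (1 : ℝ)).sub
    (hQ.mul hcos)).congr_fderiv ?_
  ext <;> simp; ring

noncomputable def hypPolar (p : ℝ × ℝ) : ℝ × ℝ :=
  (polarDenom p)⁻¹ • (-(circleRadius p.1 * sin p.2), 1)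

lemma hasFDerivAt_hypPolar_and_det_fderiv {p : ℝ × ℝ} (hu : 0 < p.1) :
    HasFDerivAt hypPolar (fderiv ℝ hypPolar p) p ∧
      (fderiv ℝ hypPolar p).det = 2 / polarDenom p ^ 2 := by
  have hD0 := (polarDenom_pos hu.le).ne'
  have hQ : HasFDerivAt (fun q : ℝ × ℝ => circleRadius q.1)
      (((4 * p.1 + 2) / circleRadius p.1) • ContinuousLinearMap.fst ℝ ℝ ℝ) p :=
    (hasDerivAt_circleRadius hu).comp_hasFDerivAt p hasFDerivAt_fst
  have hsin : HasFDerivAt (fun q : ℝ × ℝ => sin q.2)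
      (cos p.2 • ContinuousLinearMap.snd ℝ ℝ ℝ) p :=
    (hasDerivAt_sin p.2).comp_hasFDerivAt p hasFDerivAt_snd
  have h : HasFDerivAt hypPolar _ p :=
    ((hasDerivAt_inv hD0).comp_hasFDerivAt p (hasFDerivAt_polarDenom hu)).smul
      ((hQ.mul hsin).neg.prodMk (hasFDerivAt_const (1 : ℝ) p))
  rw [h.fderiv]
  refine ⟨h, ?_⟩
  have hQ0 := circleRadius_pos hu
  rw [ContinuousLinearMap.det_real_prod]
  simp only [Function.comp_apply, neg_add_rev, smul_add, neg_smul, add_apply, smul_apply,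
    ContinuousLinearMap.prod_apply, neg_apply, ContinuousLinearMap.coe_fst', smul_eq_mul, mul_one,
    ContinuousLinearMap.coe_snd', mul_zero, neg_zero, add_zero, zero_apply, Prod.smul_mk, mul_neg,
    ContinuousLinearMap.smulRight_apply, Prod.neg_mk, neg_neg, Prod.mk_add_mk, zero_add,
    sub_neg_eq_add]
  unfold polarDenom at *
  field_simp
  linear_combination
    (1 + 2 * p.1 - circleRadius p.1 * cos p.2) * (4 * p.1 + 2) * sin_sq_add_cos_sq p.2

lemma hypPolar_sq_add_sq {p : ℝ × ℝ} (hu : 0 ≤ p.1) :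
    (hypPolar p).1 ^ 2 + ((hypPolar p).2 - 1) ^ 2 = 4 * p.1 * (hypPolar p).2 := by
  have hD := (polarDenom_pos hu).ne'
  have hQsq := circleRadius_sq hu
  simp only [hypPolar, Prod.smul_mk, smul_eq_mul]
  unfold polarDenom at *
  field_simp
  linear_combination hQsq + circleRadius p.1 ^ 2 * sin_sq_add_cos_sq p.2

lemma hypu_I_hypPolar {p : ℝ × ℝ} (hu : 0 ≤ p.1) :
    hypu Complex.I ((hypPolar p).1 + (hypPolar p).2 * Complex.I) = p.1 := by
  have hy : 0 < (hypPolar p).2 := by simpa [hypPolar] using polarDenom_pos hu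
  rw [hypu_I, hypPolar_sq_add_sq hu]
  field_simp

def polarDomain : Set (ℝ × ℝ) := Ioi 0 ×ˢ Ioo (-π) π

/-- The angle is read off from `(1 + 2u - 1/y) + i (-x/y) = Q(u) e^{iθ}`. -/
noncomputable def hypPolarInv (w : ℝ × ℝ) : ℝ × ℝ :=
  (hypu Complex.I (w.1 + w.2 * Complex.I),
    Complex.arg ⟨1 + 2 * hypu Complex.I (w.1 + w.2 * Complex.I) - w.2⁻¹, -w.1 / w.2⟩)

lemma leftInvOn_hypPolarInv : LeftInvOn hypPolarInv hypPolar polarDomain := by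
  rintro p ⟨hu, hθ⟩
  have hD := (polarDenom_pos (le_of_lt hu)).ne'
  rw [hypPolarInv, hypu_I_hypPolar (le_of_lt hu)]
  refine Prod.ext rfl ?_
  have hζ : (⟨1 + 2 * p.1 - (hypPolar p).2⁻¹, -(hypPolar p).1 / (hypPolar p).2⟩ : ℂ) =
      circleRadius p.1 * (Complex.cos p.2 + Complex.sin p.2 * Complex.I) := by
    apply Complex.ext
    · simp [hypPolar, polarDenom, ← Complex.ofReal_cos, ← Complex.ofReal_sin]
    · simp [hypPolar, ← Complex.ofReal_cos, ← Complex.ofReal_sin]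
      field_simp
  rw [hζ, Complex.arg_real_mul _ (circleRadius_pos hu),
    Complex.arg_cos_add_sin_mul_I (Ioo_subset_Ioc_self hθ)]

lemma hypPolar_hypPolarInv {w : ℝ × ℝ} (hy : 0 < w.2) (hx : w.1 ≠ 0) :
    hypPolarInv w ∈ polarDomain ∧ hypPolar (hypPolarInv w) = w := by
  obtain ⟨x, y⟩ := w
  dsimp only at hy hx
  set u := hypu Complex.I (x + y * Complex.I) with hu_def
  have hu_eq : 4 * u * y = x ^ 2 + (y - 1) ^ 2 := by
    rw [hu_def, hypu_I]; field_simp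
  have hu : 0 < u := by rw [hu_def, hypu_I]; positivity
  set ζ : ℂ := ⟨1 + 2 * u - y⁻¹, -x / y⟩ with hζ_def
  have hζ_im : ζ.im ≠ 0 := by simp [hζ_def, hx, hy.ne']
  have hζ_norm : ‖ζ‖ = circleRadius u := by
    have hsq : ‖ζ‖ ^ 2 = circleRadius u ^ 2 := by
      rw [Complex.sq_norm, Complex.normSq_mk, circleRadius_sq hu.le]
      field_simp
      linear_combination -hu_eq
    exact (sq_eq_sq₀ (norm_nonneg _) (circleRadius_pos hu).le).1 hsq
  have harg : hypPolarInv (x, y) = (u, ζ.arg) := rfl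
  refine ⟨harg ▸ ⟨hu, Complex.neg_pi_lt_arg ζ, Complex.arg_lt_pi_iff.2 (Or.inr hζ_im)⟩, ?_⟩
  have hcos : circleRadius u * cos ζ.arg = 1 + 2 * u - y⁻¹ := by
    rw [Complex.cos_arg (fun h => hζ_im (by simp [h])), hζ_norm, hζ_def]
    field_simp [(circleRadius_pos hu).ne']
  have hsin : circleRadius u * sin ζ.arg = -x / y := by
    rw [Complex.sin_arg, hζ_norm, hζ_def]
    field_simp [(circleRadius_pos hu).ne']
  have hD : polarDenom (u, ζ.arg) = y⁻¹ := by
    simp only [polarDenom, hcos]; ring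
  rw [harg, hypPolar, hD]
  simp only [hsin, inv_inv, Prod.smul_mk, smul_eq_mul, mul_one]
  congr 1
  field_simp

noncomputable def hypPolarAt (z : ℂ) (p : ℝ × ℝ) : ℝ × ℝ := (z.re, 0) + z.im • hypPolar p

lemma hasFDerivAt_hypPolarAt_and_det_fderiv (z : ℂ) {p : ℝ × ℝ} (hu : 0 < p.1) :
    HasFDerivAt (hypPolarAt z) (fderiv ℝ (hypPolarAt z) p) p ∧
      (fderiv ℝ (hypPolarAt z) p).det = 2 * (hypPolarAt z p).2 ^ 2 := by
  obtain ⟨h, hdet⟩ := hasFDerivAt_hypPolar_and_det_fderiv hu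
  have h' : HasFDerivAt (hypPolarAt z) (z.im • fderiv ℝ hypPolar p) p :=
    (h.const_smul z.im).const_add (z.re, 0)
  rw [h'.fderiv]
  refine ⟨h', ?_⟩
  rw [ContinuousLinearMap.det_real_prod] at hdet ⊢
  simp only [FunLike.coe_smul, Pi.smul_apply, Prod.smul_fst, Prod.smul_snd, smul_eq_mul,
    hypPolarAt, hypPolar, Prod.snd_add, zero_add, mul_one]
  linear_combination z.im ^ 2 * hdet

lemma hypPolarAt_snd_pos {z : ℂ} (hz : 0 < z.im) {p : ℝ × ℝ} (hu : 0 ≤ p.1) :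
    0 < (hypPolarAt z p).2 := by
  simpa [hypPolarAt, hypPolar] using mul_pos hz (inv_pos.2 (polarDenom_pos hu))

lemma injOn_hypPolarAt {z : ℂ} (hz : z.im ≠ 0) : InjOn (hypPolarAt z) polarDomain :=
  ((add_right_injective _).comp (smul_right_injective _ hz)).comp_injOn
    leftInvOn_hypPolarInv.injOn

lemma hypu_hypPolarAt {z : ℂ} (hz : z.im ≠ 0) {p : ℝ × ℝ} (hu : 0 ≤ p.1) :
    hypu z ((hypPolarAt z p).1 + (hypPolarAt z p).2 * Complex.I) = p.1 := by
  have hw : ((hypPolarAt z p).1 + (hypPolarAt z p).2 * Complex.I : ℂ) =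
      z.re + z.im * ((hypPolar p).1 + (hypPolar p).2 * Complex.I) := by
    simp [hypPolarAt]; ring
  have h := hypu_affine z.re hz Complex.I ((hypPolar p).1 + (hypPolar p).2 * Complex.I)
  rwa [Complex.re_add_im, hypu_I_hypPolar hu, ← hw] at h

lemma hypPolarAt_image_ae_eq {z : ℂ} (hz : 0 < z.im) :
    hypPolarAt z '' polarDomain =ᵐ[volume] {w : ℝ × ℝ | 0 < w.2} := by
  have hsub : hypPolarAt z '' polarDomain ⊆ {w | 0 < w.2} := by
    rintro _ ⟨p, ⟨hu, -⟩, rfl⟩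
    exact hypPolarAt_snd_pos hz (le_of_lt hu)
  have hcover : {w : ℝ × ℝ | 0 < w.2} \ hypPolarAt z '' polarDomain ⊆ {w | w.1 = z.re} := by
    rintro w ⟨hy, hw⟩
    by_contra hx
    set w' : ℝ × ℝ := z.im⁻¹ • (w - (z.re, 0))
    obtain ⟨hmem, hinv⟩ := hypPolar_hypPolarInv (w := w')
      (by simpa [w'] using mul_pos (inv_pos.2 hz) hy)
      (by simpa [w', sub_eq_zero, hz.ne'] using hx)
    refine hw ⟨hypPolarInv w', hmem, ?_⟩
    rw [hypPolarAt, hinv, smul_inv_smul₀ hz.ne', add_sub_cancel]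
  have hline : volume {w : ℝ × ℝ | w.1 = z.re} = 0 := by
    rw [show {w : ℝ × ℝ | w.1 = z.re} = {z.re} ×ˢ univ by ext; simp, Measure.volume_eq_prod,
      Measure.prod_prod, Real.volume_singleton, zero_mul]
  exact hsub.eventuallyLE.antisymm (ae_le_set.2 (measure_mono_null hcover hline))

lemma setLIntegral_polarDomain_fst {f : ℝ → ℝ≥0∞} (hf : Measurable f) :
    ∫⁻ p in polarDomain, f p.1 = ENNReal.ofReal (2 * π) * ∫⁻ u in Ioi 0, f u := by
  have h := lintegral_prod_mul (μ := volume.restrict (Ioi (0 : ℝ)))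
    (ν := volume.restrict (Ioo (-π) π)) hf.aemeasurable (aemeasurable_const (b := (1 : ℝ≥0∞)))
  rw [Measure.prod_restrict, ← Measure.volume_eq_prod] at h
  simp only [mul_one, lintegral_const, Measure.restrict_apply_univ, Real.volume_Ioo] at h
  rw [polarDomain, h, mul_comm]
  ring_nf

/-- For `z ∈ ℍ` and measurable `φ : [0,∞) → [0,∞]`,
`∫_ℍ φ(u(z,w)) dμ(w) = 4π ∫₀^∞ φ(u) du`, where `dμ = y⁻² dx dy` is the hyperbolic measure,
written in the coordinates `w = x + iy`. -/
theorem stmt5 (z : ℂ) (hz : 0 < z.im) (φ : ℝ → ℝ≥0∞) (hφ : Measurable φ) :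
    (∫⁻ p in {p : ℝ × ℝ | 0 < p.2},
        φ (hypu z ((p.1 : ℂ) + (p.2 : ℂ) * Complex.I)) * ENNReal.ofReal ((p.2 ^ 2)⁻¹)) =
      ENNReal.ofReal (4 * Real.pi) * ∫⁻ u in Set.Ioi (0:ℝ), φ u := by
  have hS : MeasurableSet polarDomain := measurableSet_Ioi.prod measurableSet_Ioo
  have hdensity : ∀ p ∈ polarDomain,
      ENNReal.ofReal |(fderiv ℝ (hypPolarAt z) p).det| *
          (φ (hypu z ((hypPolarAt z p).1 + (hypPolarAt z p).2 * Complex.I)) *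
            ENNReal.ofReal (((hypPolarAt z p).2 ^ 2)⁻¹)) = φ p.1 * ENNReal.ofReal 2 := by
    rintro p ⟨hu, -⟩
    have hy := hypPolarAt_snd_pos hz (le_of_lt hu)
    rw [(hasFDerivAt_hypPolarAt_and_det_fderiv z hu).2, hypu_hypPolarAt hz.ne' (le_of_lt hu),
      mul_left_comm, ← ENNReal.ofReal_mul (abs_nonneg _), abs_of_pos (by positivity)]
    field_simp
  rw [← setLIntegral_congr (hypPolarAt_image_ae_eq hz),
    lintegral_image_eq_lintegral_abs_det_fderiv_mul volume hS
      (fun p hp => (hasFDerivAt_hypPolarAt_and_det_fderiv z hp.1).1.hasFDerivWithinAt)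
      (injOn_hypPolarAt hz.ne'),
    setLIntegral_congr_fun hS hdensity, lintegral_mul_const' _ _ ENNReal.ofReal_ne_top,
    setLIntegral_polarDomain_fst hφ, mul_right_comm, ← ENNReal.ofReal_mul (by positivity)]
  ring_nf
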